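/- Let P be the transition matrix of the Jump/Hop chain X_t(n) on Ω_{a,b,c} with strengths 0 < s_A < s_B < s_C, and define the weight w(v) = ∏_{i=1}^{n} s_{v(i)}^{i} for v ∈ Ω_{a,b,c}. Then w satisfies detailed balance: w(v)·P(v,u) = w(u)·P(u,v) for all u, v ∈ Ω_{a,b,c}. Consequently, π(v) = w(v)/∑_{u} w(u) is a reversible (hence stationary) distribution for X_t(n), and it coincides with the stationary distribution of the linear particle system X_3(n) on the same state space. -/

import Mathlib

/-!
Every move of either chain acts on a pair of positions `i < j` and can only keep the word `v`
or exchange its letters at `i` and `j`. The weight `w(v) = ∏ s_{v(i)}^i` changes under this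
exchange by the factor `w(v) / w(v ∘ (i j)) = (s_{v(j)} / s_{v(i)})^{j-i}`, which is exactly the
odds used by the Jump and Hop rules (and, for `j = i + 1`, by the adjacent swaps of `X₃(n)`).
So each active move is a heat-bath move between `v` and `v ∘ (i j)`, which is reversible for
`w`, and reversibility survives averaging over pairs. Normalizing `w` gives `π`; it is
stationary because the rows of the transition matrix sum to one.
-/

open Finset

/-- State space `Ω_{n₁,…,n_k}` of the linear particle system: words of length `n`
over `{1,…,k}` with exactly `cnt j` letters equal to `j`. -/
abbrev PSpace (n k : ℕ) (cnt : Fin k → ℕ) : Type :=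
  {w : Fin n → Fin k // ∀ j : Fin k, (Finset.univ.filter fun i => w i = j).card = cnt j}

/-- Transition matrix of the linear particle system `X_k(n)`: from state `v`, a
position `i` with `i+1 < n` is chosen uniformly; if the two letters are equal nothing
happens, otherwise they are swapped with probability `s(v i)/(s(v i)+s(v (i+1)))`. -/
noncomputable def partP (n k : ℕ) (cnt : Fin k → ℕ) (s : Fin k → ℝ) :
    Matrix (PSpace n k cnt) (PSpace n k cnt) ℝ :=
  fun v u => (1 / ((n : ℝ) - 1)) * ∑ i : Fin n, ∑ j : Fin n,
    if (j : ℕ) = (i : ℕ) + 1 then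
      if v.1 i = v.1 j then (if u = v then 1 else 0)
      else
        (s (v.1 i) / (s (v.1 i) + s (v.1 j))) *
          (if u.1 = v.1 ∘ Equiv.swap i j then 1 else 0)
        + (s (v.1 j) / (s (v.1 i) + s (v.1 j))) *
          (if u = v then 1 else 0)
    else 0

/-- Unnormalized stationary weight of the linear particle system:
`w(v) = ∏_i s(v i)^i` (positions counted `1,…,n`). -/
noncomputable def partW (n k : ℕ) (cnt : Fin k → ℕ) (s : Fin k → ℝ)
    (v : PSpace n k cnt) : ℝ :=
  ∏ i : Fin n, s (v.1 i) ^ ((i : ℕ) + 1)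

/-- Stationary distribution of the linear particle system. -/
noncomputable def partPi (n k : ℕ) (cnt : Fin k → ℕ) (s : Fin k → ℝ)
    (v : PSpace n k cnt) : ℝ :=
  partW n k cnt s v / ∑ u : PSpace n k cnt, partW n k cnt s u

/-- Transition matrix of the Jump/Hop chain `X_t(n)` on `Ω_{a,b,c}`; letters of the
alphabet `Fin 3` are `0 = A`, `1 = B`, `2 = C`.  A pair of positions `i < j` is chosen
uniformly at random and a Jump or Hop move is performed when its preconditions hold. -/
noncomputable def jumpP (a b c : ℕ) (sA sB sC : ℝ) :
    Matrix (PSpace (a + b + c) 3 ![a, b, c]) (PSpace (a + b + c) 3 ![a, b, c]) ℝ :=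
  fun v u =>
    (1 / ((a + b + c).choose 2 : ℝ)) *
      ∑ i : Fin (a + b + c), ∑ j : Fin (a + b + c),
        if i < j then
          if ((v.1 i = 0 ∧ v.1 j = 2) ∨ (v.1 i = 2 ∧ v.1 j = 0)) ∧
              (∀ l, i < l → l < j → v.1 l = 1) then
            -- Jump
            ((sC / sA) ^ ((j : ℕ) - (i : ℕ)) / (1 + (sC / sA) ^ ((j : ℕ) - (i : ℕ)))) *
              (if u.1 = (fun x => if x = i then (0 : Fin 3) else if x = j then 2 else v.1 x)
                then 1 else 0)
            + (1 / (1 + (sC / sA) ^ ((j : ℕ) - (i : ℕ)))) *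
              (if u.1 = (fun x => if x = i then (2 : Fin 3) else if x = j then 0 else v.1 x)
                then 1 else 0)
          else if (v.1 i = 0 ∧ ∀ l, i < l → l ≤ j → v.1 l = 1) ∨
                  (v.1 j = 0 ∧ ∀ l, i ≤ l → l < j → v.1 l = 1) then
            -- Hop, A–B case
            ((sB / sA) ^ ((j : ℕ) - (i : ℕ)) / (1 + (sB / sA) ^ ((j : ℕ) - (i : ℕ)))) *
              (if u.1 = (fun x => if x = i then (0 : Fin 3)
                  else if i ≤ x ∧ x ≤ j then 1 else v.1 x) then 1 else 0)
            + (1 / (1 + (sB / sA) ^ ((j : ℕ) - (i : ℕ)))) *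
              (if u.1 = (fun x => if x = j then (0 : Fin 3)
                  else if i ≤ x ∧ x ≤ j then 1 else v.1 x) then 1 else 0)
          else if (v.1 i = 2 ∧ ∀ l, i < l → l ≤ j → v.1 l = 1) ∨
                  (v.1 j = 2 ∧ ∀ l, i ≤ l → l < j → v.1 l = 1) then
            -- Hop, B–C case
            ((sC / sB) ^ ((j : ℕ) - (i : ℕ)) / (1 + (sC / sB) ^ ((j : ℕ) - (i : ℕ)))) *
              (if u.1 = (fun x => if x = j then (2 : Fin 3)
                  else if i ≤ x ∧ x ≤ j then 1 else v.1 x) then 1 else 0)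
            + (1 / (1 + (sC / sB) ^ ((j : ℕ) - (i : ℕ)))) *
              (if u.1 = (fun x => if x = i then (2 : Fin 3)
                  else if i ≤ x ∧ x ≤ j then 1 else v.1 x) then 1 else 0)
          else (if u = v then 1 else 0)
        else 0

def DetailedBalance {β : Type*} (W : β → ℝ) (P : β → β → ℝ) : Prop :=
  ∀ v u, W v * P v u = W u * P u v

namespace DetailedBalance

variable {β ι : Type*} {W : β → ℝ} {P : β → β → ℝ}

lemma const_mul (c : ℝ) (h : DetailedBalance W P) : DetailedBalance W fun v u => c * P v u :=
  fun v u => by rw [mul_left_comm, h, mul_left_comm]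

lemma ite_zero (p : Prop) [Decidable p] (h : DetailedBalance W P) :
    DetailedBalance W fun v u => if p then P v u else 0 := by
  intro v u
  split_ifs
  exacts [h v u, by rw [mul_zero, mul_zero]]

lemma sum {T : ι → β → β → ℝ} (s : Finset ι)
    (h : ∀ m ∈ s, DetailedBalance W (T m)) :
    DetailedBalance W fun v u => ∑ m ∈ s, T m v u :=
  fun v u => by rw [mul_sum, mul_sum]; exact sum_congr rfl fun m hm => h m hm v u

lemma div_const (Z : ℝ) (h : DetailedBalance W P) : DetailedBalance (fun v => W v / Z) P :=
  fun v u => by rw [div_mul_eq_mul_div, div_mul_eq_mul_div, h]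

lemma sum_mul_eq [Fintype β] (h : DetailedBalance W P) (hP : ∀ v, ∑ u, P v u = 1) (u : β) :
    ∑ v, W v * P v u = W u := by
  simp only [h _ u, ← mul_sum, hP, mul_one]

end DetailedBalance

section HeatBath

variable {β : Type*} [DecidableEq β] (W : β → ℝ)

noncomputable def heatBath (v v' u : β) : ℝ :=
  W v / (W v + W v') * (if u = v then 1 else 0) + W v' / (W v + W v') * (if u = v' then 1 else 0)

lemma heatBath_comm (v v' u : β) : heatBath W v v' u = heatBath W v' v u := by
  rw [heatBath, heatBath, add_comm (W v'), add_comm]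

lemma heatBath_eq_of_eq_mul {v v' : β} {r : ℝ} (hv' : W v' ≠ 0)
    (hW : W v = r * W v') (u : β) :
    heatBath W v v' u =
      r / (1 + r) * (if u = v then 1 else 0) + 1 / (1 + r) * (if u = v' then 1 else 0) := by
  have hsum : W v + W v' = (1 + r) * W v' := by rw [hW]; ring
  rw [heatBath, hsum, hW]
  field_simp

lemma sum_heatBath [Fintype β] {v v' : β} (h : W v + W v' ≠ 0) :
    ∑ u, heatBath W v v' u = 1 := by
  simp only [heatBath, sum_add_distrib, ← mul_sum, sum_ite_eq', mem_univ, if_true, mul_one]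
  rw [← add_div, div_self h]

variable (M : β → Prop) [DecidablePred M] (σ : β → β)

noncomputable def pairMove (v u : β) : ℝ :=
  if M v then heatBath W v (σ v) u else if u = v then 1 else 0

variable {W M σ}

lemma pairMove_pos {v : β} (h : M v) (u : β) : pairMove W M σ v u = heatBath W v (σ v) u :=
  if_pos h

lemma pairMove_neg {v : β} (h : ¬M v) (u : β) : pairMove W M σ v u = if u = v then 1 else 0 :=
  if_neg h

lemma pairMove_eq_zero {v u : β} (hv : u ≠ v) (hσv : u ≠ σ v) : pairMove W M σ v u = 0 := by
  simp [pairMove, heatBath, hv, hσv]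

lemma detailedBalance_pairMove (hσ : Function.Involutive σ) (hM : ∀ v, M (σ v) ↔ M v) :
    DetailedBalance W (pairMove W M σ) := by
  intro v u
  by_cases huv : u = v
  · rw [huv]
  by_cases hu : u = σ v
  · subst hu
    have hvσ : v ≠ σ v := fun h => huv h.symm
    by_cases hMv : M v
    · simp only [pairMove, hMv, (hM v).2 hMv, if_true, hσ v, heatBath, huv, hvσ, if_false]
      ring
    · simp only [pairMove, hMv, (hM v).not.2 hMv, if_false, huv, hvσ, mul_zero]
  · have hvu : v ≠ u := Ne.symm huv
    have hvσu : v ≠ σ u := fun h => hu (by rw [h, hσ u])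
    rw [pairMove_eq_zero huv hu, pairMove_eq_zero hvu hvσu, mul_zero, mul_zero]

lemma sum_pairMove [Fintype β] (v : β) (h : W v + W (σ v) ≠ 0) :
    ∑ u, pairMove W M σ v u = 1 := by
  unfold pairMove
  split_ifs
  exacts [sum_heatBath W h, by simp]

end HeatBath

section Words

variable {n : ℕ} {α : Type*}

def setPair (w : Fin n → α) (i j : Fin n) (p q : α) : Fin n → α :=
  fun x => if x = i then p else if x = j then q else w x

lemma setPair_self (w : Fin n → α) (i j : Fin n) : setPair w i j (w i) (w j) = w := by
  funext x
  unfold setPair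
  split_ifs with hi hj
  exacts [congrArg w hi.symm, congrArg w hj.symm, rfl]

lemma setPair_eq_comp_swap (w : Fin n → α) (i j : Fin n) :
    setPair w i j (w j) (w i) = w ∘ Equiv.swap i j := by
  funext x
  unfold setPair
  split_ifs with hi hj
  · simp [hi]
  · simp [hj]
  · simp [Equiv.swap_apply_of_ne_of_ne hi hj]

variable {w : Fin n → α} {i j : Fin n} {b : α}

lemma hopLeft_eq_setPair (hij : i < j) (hint : ∀ l, i < l → l < j → w l = b) (p : α) :
    (fun x => if x = i then p else if i ≤ x ∧ x ≤ j then b else w x) = setPair w i j p b := by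
  funext x
  unfold setPair
  split_ifs <;> grind

lemma hopRight_eq_setPair (hij : i < j) (hint : ∀ l, i < l → l < j → w l = b) (p : α) :
    (fun x => if x = j then p else if i ≤ x ∧ x ≤ j then b else w x) = setPair w i j b p := by
  funext x
  unfold setPair
  split_ifs <;> grind

end Words

namespace PSpace

variable {n k : ℕ} {cnt : Fin k → ℕ}

def swap (v : PSpace n k cnt) (i j : Fin n) : PSpace n k cnt :=
  ⟨v.1 ∘ Equiv.swap i j, fun t => by
    rw [← v.2 t, card_filter, card_filter]
    exact Equiv.sum_comp (Equiv.swap i j) fun x => if v.1 x = t then 1 else 0⟩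

lemma swap_val (v : PSpace n k cnt) (i j : Fin n) : (v.swap i j).1 = v.1 ∘ Equiv.swap i j := rfl

lemma swap_swap (v : PSpace n k cnt) (i j : Fin n) : (v.swap i j).swap i j = v :=
  Subtype.ext <| funext fun x => by simp [swap]

lemma involutive_swap (i j : Fin n) : Function.Involutive fun v : PSpace n k cnt => v.swap i j :=
  fun v => swap_swap v i j

variable {s : Fin k → ℝ}

lemma partW_pos (hs : ∀ t, 0 < s t) (v : PSpace n k cnt) : 0 < partW n k cnt s v :=
  prod_pos fun _ _ => pow_pos (hs _) _

lemma partW_eq_mul_partW_swap (v : PSpace n k cnt) {i j : Fin n} (hij : i < j)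
    (hi : s (v.1 i) ≠ 0) :
    partW n k cnt s v =
      (s (v.1 j) / s (v.1 i)) ^ ((j : ℕ) - i) * partW n k cnt s (v.swap i j) := by
  have hsplit : ∀ w : PSpace n k cnt, partW n k cnt s w = s (w.1 i) ^ ((i : ℕ) + 1) *
      s (w.1 j) ^ ((j : ℕ) + 1) * ∏ x ∈ {i, j}ᶜ, s (w.1 x) ^ ((x : ℕ) + 1) := fun w => by
    rw [partW, ← prod_mul_prod_compl {i, j}, prod_pair hij.ne]
  have hrest : ∏ x ∈ {i, j}ᶜ, s ((v.swap i j).1 x) ^ ((x : ℕ) + 1) =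
      ∏ x ∈ {i, j}ᶜ, s (v.1 x) ^ ((x : ℕ) + 1) := prod_congr rfl fun x hx => by
    simp only [mem_compl, mem_insert, mem_singleton, not_or] at hx
    simp [swap, Equiv.swap_apply_of_ne_of_ne hx.1 hx.2]
  have hj : (j : ℕ) + 1 = (i + 1) + (j - i) := by omega
  rw [hsplit, hsplit, hrest]
  simp only [swap, Function.comp_apply, Equiv.swap_apply_left, Equiv.swap_apply_right]
  rw [hj, pow_add, pow_add, div_pow]
  field_simp
  ring

lemma twoOutcome_eq_heatBath (hs : ∀ t, 0 < s t) {i j : Fin n} (hij : i < j)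
    (v u : PSpace n k cnt) {p q : Fin k}
    (hv : v.1 i = p ∧ v.1 j = q ∨ v.1 i = q ∧ v.1 j = p) :
    (s q / s p) ^ ((j : ℕ) - i) / (1 + (s q / s p) ^ ((j : ℕ) - i)) *
        (if u.1 = setPair v.1 i j p q then 1 else 0) +
      1 / (1 + (s q / s p) ^ ((j : ℕ) - i)) * (if u.1 = setPair v.1 i j q p then 1 else 0) =
      heatBath (partW n k cnt s) v (v.swap i j) u := by
  rcases hv with ⟨rfl, rfl⟩ | ⟨rfl, rfl⟩
  · rw [setPair_self, setPair_eq_comp_swap, ← swap_val,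
      heatBath_eq_of_eq_mul _ (partW_pos hs _).ne' (partW_eq_mul_partW_swap v hij (hs _).ne')]
    simp only [Subtype.val_inj]
  · rw [setPair_self, setPair_eq_comp_swap, ← swap_val, heatBath_comm,
      heatBath_eq_of_eq_mul (r := (s (v.1 i) / s (v.1 j)) ^ ((j : ℕ) - i)) _ (partW_pos hs _).ne']
    · simp only [Subtype.val_inj]
    · have h := partW_eq_mul_partW_swap (v.swap i j) hij (hs _).ne'
      rwa [swap_swap, swap_val, Function.comp_apply, Function.comp_apply, Equiv.swap_apply_left,
        Equiv.swap_apply_right] at h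

end PSpace

instance (a b c : ℕ) : Nonempty (PSpace (a + b + c) 3 ![a, b, c]) :=
  ⟨⟨Fin.append (Fin.append (fun _ : Fin a => 0) fun _ : Fin b => 1) fun _ : Fin c => 2,
    fun t => by
      fin_cases t <;>
        simp only [card_filter, Fin.sum_univ_add, Fin.append_left, Fin.append_right] <;> simp⟩⟩

lemma sum_sum_ite_lt_eq_choose_two (n : ℕ) :
    ∑ i : Fin n, ∑ j : Fin n, (if i < j then (1 : ℝ) else 0) = n.choose 2 := by
  rw [sum_comm]
  have hcol (j : Fin n) : ∑ i : Fin n, (if i < j then (1 : ℝ) else 0) = (j : ℕ) := by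
    rw [sum_boole, ← Fin.card_Iio j]
    congr 2
    ext; simp
  simp only [hcol]
  rw [Fin.sum_univ_eq_sum_range (fun i => (i : ℝ)) n, ← Nat.cast_sum, sum_range_id,
    Nat.choose_two_right]

section JumpHop

variable {n : ℕ}

def IsActivePair (w : Fin n → Fin 3) (i j : Fin n) : Prop :=
  w i ≠ w j ∧ ∀ l, i < l → l < j → w l = 1

instance (w : Fin n → Fin 3) (i j : Fin n) : Decidable (IsActivePair w i j) :=
  inferInstanceAs (Decidable (_ ∧ _))

lemma isActivePair_comp_swap {w : Fin n → Fin 3} {i j : Fin n} :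
    IsActivePair (w ∘ Equiv.swap i j) i j ↔ IsActivePair w i j := by
  have hint : ∀ l, i < l → l < j → (w ∘ Equiv.swap i j) l = w l := fun l hil hlj => by
    simp [Equiv.swap_apply_of_ne_of_ne hil.ne' hlj.ne]
  simp +contextual only [IsActivePair, hint, Function.comp_apply, Equiv.swap_apply_left,
    Equiv.swap_apply_right, ne_comm]

lemma isActivePair_of_or {w : Fin n → Fin 3} {i j : Fin n} {p q : Fin 3} (hpq : p ≠ q)
    (hv : w i = p ∧ w j = q ∨ w i = q ∧ w j = p) (hint : ∀ l, i < l → l < j → w l = 1) :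
    IsActivePair w i j := by
  refine ⟨?_, hint⟩
  rcases hv with ⟨hi, hj⟩ | ⟨hi, hj⟩ <;> rw [hi, hj]
  exacts [hpq, hpq.symm]

lemma hop_precondition_iff {α : Type*} {w : Fin n → α} {i j : Fin n} (hij : i < j)
    {p b : α} :
    ((w i = p ∧ ∀ l, i < l → l ≤ j → w l = b) ∨
        (w j = p ∧ ∀ l, i ≤ l → l < j → w l = b)) ↔
      (w i = p ∧ w j = b ∨ w i = b ∧ w j = p) ∧ ∀ l, i < l → l < j → w l = b := by
  constructor
  · rintro (⟨hi, h⟩ | ⟨hj, h⟩)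
    exacts [⟨.inl ⟨hi, h j hij le_rfl⟩, fun l hil hlj => h l hil hlj.le⟩,
      ⟨.inr ⟨h i le_rfl hij, hj⟩, fun l hil hlj => h l hil.le hlj⟩]
  · rintro ⟨⟨hi, hj⟩ | ⟨hi, hj⟩, h⟩
    · exact .inl ⟨hi, fun l hil hlj => (eq_or_lt_of_le hlj).elim (· ▸ hj) (h l hil)⟩
    · exact .inr ⟨hj, fun l hil hlj => (eq_or_lt_of_le hil).elim (· ▸ hi) (h l · hlj)⟩

noncomputable def jumpHopMove {cnt : Fin 3 → ℕ} (s : Fin 3 → ℝ) (i j : Fin n) :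
    PSpace n 3 cnt → PSpace n 3 cnt → ℝ :=
  pairMove (partW n 3 cnt s) (fun w => IsActivePair w.1 i j) fun w => w.swap i j

section

variable {cnt : Fin 3 → ℕ} {s : Fin 3 → ℝ} {i j : Fin n} {v : PSpace n 3 cnt}

lemma jumpHopMove_of_isActivePair (h : IsActivePair v.1 i j) (u : PSpace n 3 cnt) :
    jumpHopMove s i j v u = heatBath (partW n 3 cnt s) v (v.swap i j) u :=
  pairMove_pos (M := fun w : PSpace n 3 cnt => IsActivePair w.1 i j) h u

lemma jumpHopMove_of_not_isActivePair (h : ¬IsActivePair v.1 i j) (u : PSpace n 3 cnt) :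
    jumpHopMove s i j v u = if u = v then 1 else 0 :=
  pairMove_neg (M := fun w : PSpace n 3 cnt => IsActivePair w.1 i j) h u

end

lemma jumpP_eq_sum_jumpHopMove (a b c : ℕ) {sA sB sC : ℝ} (hs : ∀ t, 0 < ![sA, sB, sC] t)
    (v u : PSpace (a + b + c) 3 ![a, b, c]) :
    jumpP a b c sA sB sC v u = 1 / ((a + b + c).choose 2 : ℝ) *
      ∑ i, ∑ j, if i < j then jumpHopMove ![sA, sB, sC] i j v u else 0 := by
  have letter_pairs : ∀ x y : Fin 3, x ≠ y → (x = 0 ∧ y = 2 ∨ x = 2 ∧ y = 0) ∨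
      (x = 0 ∧ y = 1 ∨ x = 1 ∧ y = 0) ∨ (x = 2 ∧ y = 1 ∨ x = 1 ∧ y = 2) := by decide
  rw [jumpP]
  congr 1
  refine sum_congr rfl fun i _ => sum_congr rfl fun j _ => ?_
  by_cases hij : i < j
  swap; · rw [if_neg hij, if_neg hij]
  rw [if_pos hij, if_pos hij]
  split
  next hJ =>
    rw [jumpHopMove_of_isActivePair (isActivePair_of_or (by decide) hJ.1 hJ.2)]
    exact PSpace.twoOutcome_eq_heatBath hs hij v u hJ.1
  split
  next hA =>
    obtain ⟨hv, hint⟩ := (hop_precondition_iff hij).1 hA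
    rw [jumpHopMove_of_isActivePair (isActivePair_of_or (by decide) hv hint),
      hopLeft_eq_setPair hij hint, hopRight_eq_setPair hij hint]
    exact PSpace.twoOutcome_eq_heatBath hs hij v u hv
  split
  next hC =>
    obtain ⟨hv, hint⟩ := (hop_precondition_iff hij).1 hC
    rw [jumpHopMove_of_isActivePair (isActivePair_of_or (by decide) hv hint),
      hopLeft_eq_setPair hij hint, hopRight_eq_setPair hij hint]
    exact PSpace.twoOutcome_eq_heatBath hs hij v u hv.symm
  next hJ hA hC =>
    refine (jumpHopMove_of_not_isActivePair (fun ⟨hne, hint⟩ => ?_) u).symm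
    rcases letter_pairs _ _ hne with h | h | h
    exacts [hJ ⟨h, hint⟩, hA ((hop_precondition_iff hij).2 ⟨h, hint⟩),
      hC ((hop_precondition_iff hij).2 ⟨h, hint⟩)]

lemma detailedBalance_jumpHopMove {cnt : Fin 3 → ℕ} (s : Fin 3 → ℝ) (i j : Fin n) :
    DetailedBalance (partW n 3 cnt s) (jumpHopMove s i j) :=
  detailedBalance_pairMove (PSpace.involutive_swap i j) fun _ => isActivePair_comp_swap

lemma sum_jumpHopMove {cnt : Fin 3 → ℕ} {s : Fin 3 → ℝ} (hs : ∀ t, 0 < s t) (i j : Fin n)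
    (v : PSpace n 3 cnt) : ∑ u, jumpHopMove s i j v u = 1 :=
  sum_pairMove v (by linarith [PSpace.partW_pos hs v, PSpace.partW_pos hs (v.swap i j)])

variable (a b c : ℕ) {sA sB sC : ℝ} (hs : ∀ t, 0 < ![sA, sB, sC] t)
include hs

lemma detailedBalance_jumpP :
    DetailedBalance (partW (a + b + c) 3 ![a, b, c] ![sA, sB, sC]) (jumpP a b c sA sB sC) := by
  rw [show jumpP a b c sA sB sC = _ from funext₂ (jumpP_eq_sum_jumpHopMove a b c hs)]
  exact .const_mul _ <| .sum _ fun i _ => .sum _ fun j _ =>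
    .ite_zero _ (detailedBalance_jumpHopMove _ i j)

lemma sum_jumpP (hn : 2 ≤ a + b + c) (v : PSpace (a + b + c) 3 ![a, b, c]) :
    ∑ u, jumpP a b c sA sB sC v u = 1 := by
  simp only [jumpP_eq_sum_jumpHopMove a b c hs, ← mul_sum]
  rw [sum_comm]
  simp only [sum_comm (γ := PSpace _ _ _), sum_ite_irrel, sum_jumpHopMove hs, sum_const_zero]
  rw [sum_sum_ite_lt_eq_choose_two, one_div_mul_cancel]
  exact_mod_cast (Nat.choose_pos hn).ne'

end JumpHop

section LinearParticle

variable {n k : ℕ} {cnt : Fin k → ℕ}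

noncomputable def exchangeMove (s : Fin k → ℝ) (i j : Fin n) :
    PSpace n k cnt → PSpace n k cnt → ℝ :=
  pairMove (partW n k cnt s) (fun w => w.1 i ≠ w.1 j) fun w => w.swap i j

lemma detailedBalance_exchangeMove (s : Fin k → ℝ) (i j : Fin n) :
    DetailedBalance (partW n k cnt s) (exchangeMove s i j) :=
  detailedBalance_pairMove (PSpace.involutive_swap i j) fun w => by
    simp [PSpace.swap_val, ne_comm]

variable {s : Fin k → ℝ} (hs : ∀ t, 0 < s t)
include hs

lemma partP_eq_sum_exchangeMove (v u : PSpace n k cnt) :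
    partP n k cnt s v u = 1 / ((n : ℝ) - 1) * ∑ i : Fin n, ∑ j : Fin n,
      if (j : ℕ) = (i : ℕ) + 1 then exchangeMove s i j v u else 0 := by
  rw [partP]
  congr 1
  refine sum_congr rfl fun i _ => sum_congr rfl fun j _ => ?_
  by_cases hj : (j : ℕ) = i + 1
  swap; · rw [if_neg hj, if_neg hj]
  rw [if_pos hj, if_pos hj, exchangeMove]
  by_cases hv : v.1 i = v.1 j
  · rw [if_pos hv, pairMove_neg (M := fun w : PSpace n k cnt => w.1 i ≠ w.1 j) (not_not.2 hv)]
  have hij : i < j := Fin.lt_def.2 (by omega)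
  rw [if_neg hv, pairMove_pos (M := fun w : PSpace n k cnt => w.1 i ≠ w.1 j) hv,
    heatBath_eq_of_eq_mul _ (PSpace.partW_pos hs _).ne'
      (PSpace.partW_eq_mul_partW_swap v hij (hs _).ne'),
    ← PSpace.swap_val, show (j : ℕ) - i = 1 by omega, pow_one, add_comm]
  simp only [Subtype.val_inj]
  have := hs (v.1 i)
  have := hs (v.1 j)
  congr 2 <;> field_simp

lemma detailedBalance_partP : DetailedBalance (partW n k cnt s) (partP n k cnt s) := by
  rw [show partP n k cnt s = _ from funext₂ (partP_eq_sum_exchangeMove hs)]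
  exact .const_mul _ <| .sum _ fun i _ => .sum _ fun j _ =>
    .ite_zero _ (detailedBalance_exchangeMove s i j)

end LinearParticle

/-- The weight `w(v) = ∏_i s_{v(i)}^i` satisfies detailed balance
for the Jump/Hop chain `X_t(n)` on `Ω_{a,b,c}`; consequently `π = w/∑w` is a
probability distribution which is reversible (hence stationary) for `X_t(n)`, and it
coincides with the stationary distribution of the linear particle system `X₃(n)` on
the same state space, i.e. it is reversible (hence stationary) for `X₃(n)` as well. -/
theorem jumpHop_detailed_balance (a b c : ℕ) (hn : 2 ≤ a + b + c)
    (sA sB sC : ℝ) (h0 : 0 < sA) (hAB : sA < sB) (hBC : sB < sC) :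
    (∀ v u : PSpace (a + b + c) 3 ![a, b, c],
        partW (a + b + c) 3 ![a, b, c] ![sA, sB, sC] v * jumpP a b c sA sB sC v u =
          partW (a + b + c) 3 ![a, b, c] ![sA, sB, sC] u * jumpP a b c sA sB sC u v) ∧
    (∀ v : PSpace (a + b + c) 3 ![a, b, c],
        0 ≤ partPi (a + b + c) 3 ![a, b, c] ![sA, sB, sC] v) ∧
    (∑ v : PSpace (a + b + c) 3 ![a, b, c],
        partPi (a + b + c) 3 ![a, b, c] ![sA, sB, sC] v) = 1 ∧
    (∀ v u : PSpace (a + b + c) 3 ![a, b, c],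
        partPi (a + b + c) 3 ![a, b, c] ![sA, sB, sC] v * jumpP a b c sA sB sC v u =
          partPi (a + b + c) 3 ![a, b, c] ![sA, sB, sC] u * jumpP a b c sA sB sC u v) ∧
    (∀ u : PSpace (a + b + c) 3 ![a, b, c],
        ∑ v : PSpace (a + b + c) 3 ![a, b, c],
          partPi (a + b + c) 3 ![a, b, c] ![sA, sB, sC] v * jumpP a b c sA sB sC v u =
          partPi (a + b + c) 3 ![a, b, c] ![sA, sB, sC] u) ∧
    (∀ v u : PSpace (a + b + c) 3 ![a, b, c],
        partPi (a + b + c) 3 ![a, b, c] ![sA, sB, sC] v *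
            partP (a + b + c) 3 ![a, b, c] ![sA, sB, sC] v u =
          partPi (a + b + c) 3 ![a, b, c] ![sA, sB, sC] u *
            partP (a + b + c) 3 ![a, b, c] ![sA, sB, sC] u v) := by
  have hs : ∀ t, 0 < ![sA, sB, sC] t := by
    intro t
    fin_cases t
    exacts [h0, h0.trans hAB, (h0.trans hAB).trans hBC]
  have hW := PSpace.partW_pos (n := a + b + c) (cnt := ![a, b, c]) hs
  have hZ : 0 < ∑ u, partW (a + b + c) 3 ![a, b, c] ![sA, sB, sC] u :=
    sum_pos (fun u _ => hW u) univ_nonempty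
  have hjump := (detailedBalance_jumpP a b c hs).div_const
    (∑ u, partW (a + b + c) 3 ![a, b, c] ![sA, sB, sC] u)
  refine ⟨detailedBalance_jumpP a b c hs, fun v => div_nonneg (hW v).le hZ.le, ?_, hjump,
    hjump.sum_mul_eq (sum_jumpP a b c hs hn), (detailedBalance_partP hs).div_const _⟩
  simp only [partPi, ← sum_div, div_self hZ.ne']
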